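/- Let K ≥ 1 and let n_1,…,n_K, m_1,…,m_K ≥ 1 be arm sizes. On a probability space carrying mutually independent Uniform(0,1) random variables U_{ij} (1 ≤ j ≤ n_i) and V_{ij} (1 ≤ j ≤ m_i), for parameters (θ, η) ∈ ℝ × ℝ^K define the counts X_i(θ,η) = Σ_{j=1}^{n_i} 1{U_{ij} ≤ e^{(θ+η_i)/2}} and Y_i(θ,η) = Σ_{j=1}^{m_i} 1{V_{ij} ≤ e^{(θ−η_i)/2}}. Let the data be generated at the true values (θ^(o), η^(o)), i.e. X_i = X_i(θ^(o),η^(o)), Y_i = Y_i(θ^(o),η^(o)). Then for every α ∈ [0,1], P( T(X, Y; θ^(o)) ≤ α ) ≥ α; equivalently, the repro samples confidence set Γ_α(X,Y) = {θ ∈ ℝ : T(X,Y;θ) ≤ α} contains θ^(o) with probability at least α. -/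

import Mathlib

open MeasureTheory ProbabilityTheory

namespace ReproCommonOddsRatio

/-- The number (as a real) of the `n` values `u j ω` that are at most `p`. -/
noncomputable def count {Ω : Type*} {n : ℕ} (u : Fin n → Ω → ℝ) (p : ℝ) (ω : Ω) : ℝ :=
  ∑ j : Fin n, if u j ω ≤ p then (1 : ℝ) else 0

/-- Control-arm counts `X_i(θ,η) = Σ_{j=1}^{n_i} 1{U_{ij} ≤ e^{(θ+η_i)/2}}`. -/
noncomputable def ctrlCounts {Ω : Type*} {K : ℕ} (n : Fin K → ℕ)
    (U : (i : Fin K) → Fin (n i) → Ω → ℝ) (θ : ℝ) (η : Fin K → ℝ) (ω : Ω) :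
    Fin K → ℝ :=
  fun i => count (U i) (Real.exp ((θ + η i) / 2)) ω

/-- Treatment-arm counts `Y_i(θ,η) = Σ_{j=1}^{m_i} 1{V_{ij} ≤ e^{(θ−η_i)/2}}`. -/
noncomputable def trtCounts {Ω : Type*} {K : ℕ} (m : Fin K → ℕ)
    (V : (i : Fin K) → Fin (m i) → Ω → ℝ) (θ : ℝ) (η : Fin K → ℝ) (ω : Ω) :
    Fin K → ℝ :=
  fun i => count (V i) (Real.exp ((θ - η i) / 2)) ω

/-- The Mantel–Haenszel estimator of the common log odds ratio
`W_MH(x,y) = log( (Σ_k x_k(m_k−y_k)/(m_k+n_k)) / (Σ_k y_k(n_k−x_k)/(m_k+n_k)) )`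
(with Lean's conventions `z/0 = 0` and `log 0 = 0` for degenerate values). -/
noncomputable def WMH {K : ℕ} (n m : Fin K → ℕ) (x y : Fin K → ℝ) : ℝ :=
  Real.log ((∑ k : Fin K, x k * ((m k : ℝ) - y k) / ((m k : ℝ) + (n k : ℝ))) /
            (∑ k : Fin K, y k * ((n k : ℝ) - x k) / ((m k : ℝ) + (n k : ℝ))))

/-- `γ_{(θ,η̃)}(t) = P( |W_MH(X̃, Ỹ) − θ| < t )`, where the artificial counts
`X̃, Ỹ` are generated at `(θ, η̃)` from the independent copies `U', V'`. -/
noncomputable def gammaFn {Ω : Type*} [MeasurableSpace Ω] (P : Measure Ω)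
    {K : ℕ} (n m : Fin K → ℕ)
    (U' : (i : Fin K) → Fin (n i) → Ω → ℝ)
    (V' : (i : Fin K) → Fin (m i) → Ω → ℝ)
    (θ : ℝ) (ηt : Fin K → ℝ) (t : ℝ) : ℝ :=
  (P {ω : Ω |
      |WMH n m (ctrlCounts n U' θ ηt ω) (trtCounts m V' θ ηt ω) - θ| < t}).toReal

/-- The nuclear mapping `T(x,y;θ) = inf_{η̃ ∈ ℝ^K} γ_{(θ,η̃)}(|W_MH(x,y) − θ|)`. -/
noncomputable def nuclearT {Ω : Type*} [MeasurableSpace Ω] (P : Measure Ω)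
    {K : ℕ} (n m : Fin K → ℕ)
    (U' : (i : Fin K) → Fin (n i) → Ω → ℝ)
    (V' : (i : Fin K) → Fin (m i) → Ω → ℝ)
    (x y : Fin K → ℝ) (θ : ℝ) : ℝ :=
  ⨅ ηt : Fin K → ℝ, gammaFn P n m U' V' θ ηt |WMH n m x y - θ|


/-!
The data statistic `Z = |W_MH(X, Y) - θᵒ|` and its copy `Z' = |W_MH(X', Y') - θᵒ|`, built from
`U', V'` at the same parameter `(θᵒ, ηᵒ)`, are identically distributed: both are the same
measurable function of a vector of independent uniforms. Taking `η̃ = ηᵒ` in the infimum gives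
`T(X, Y; θᵒ) ≤ P(Z' < Z)`, and `t ↦ P(Z' < t)` is the left-continuous distribution function of
`Z`, which evaluated at `Z` is stochastically at least uniform on `[0, 1]`.
-/

open Set
open scoped ENNReal

section LeftDistributionFunction

variable (μ : Measure ℝ)

theorem isLowerSet_setOf_measure_Iio_le (a : ℝ≥0∞) : IsLowerSet {t | μ (Iio t) ≤ a} :=
  fun _ _ hts hs => (measure_mono (Iio_subset_Iio hts)).trans hs

theorem measure_Iio_eq_iSup (b : ℝ) : μ (Iio b) = ⨆ t : Iio b, μ (Iio (t : ℝ)) := by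
  have hlub : IsLUB (range ((↑) : Iio b → ℝ)) b := by
    rw [Subtype.range_coe]
    exact isLUB_Iio
  conv_lhs => rw [← hlub.iUnion_Iio_eq]
  exact Monotone.measure_iUnion (μ := μ) (s := fun t : Iio b => Iio (t : ℝ))
    fun _ _ hst => Iio_subset_Iio hst

variable [IsFiniteMeasure μ]

theorem measure_Iic_eq_iInf (b : ℝ) : μ (Iic b) = ⨅ t : Ioi b, μ (Iio (t : ℝ)) := by
  have hinter : ⋂ t : Ioi b, Iio (t : ℝ) = Iic b := by
    ext x
    simp only [mem_iInter, mem_Iio, mem_Iic, Subtype.forall, mem_Ioi]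
    exact ⟨fun h => le_of_forall_gt h, fun hx t ht => hx.trans_lt ht⟩
  rw [← hinter]
  exact Monotone.measure_iInter (s := fun t : Ioi b => Iio (t : ℝ))
    (fun _ _ hst => Iio_subset_Iio hst)
    (fun _ => measurableSet_Iio.nullMeasurableSet) ⟨⟨b + 1, by simp⟩, measure_ne_top μ _⟩

theorem iInf_measure_Iio_eq_zero : ⨅ t : ℝ, μ (Iio t) = 0 := by
  have hinter : ⋂ t : ℝ, Iio t = ∅ :=
    eq_empty_of_forall_notMem fun x hx => lt_irrefl x (mem_iInter.1 hx x)
  rw [← Monotone.measure_iInter (fun (s t : ℝ) hst => Iio_subset_Iio hst)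
    (fun _ => measurableSet_Iio.nullMeasurableSet) ⟨0, measure_ne_top μ _⟩, hinter, measure_empty]

theorem le_measure_setOf_measure_Iio_le {a : ℝ≥0∞} (ha : a ≤ μ univ) :
    a ≤ μ {t | μ (Iio t) ≤ a} := by
  set S := {t | μ (Iio t) ≤ a}
  have hS : IsLowerSet S := isLowerSet_setOf_measure_Iio_le μ a
  by_cases hbdd : BddAbove S
  swap
  · have hSuniv : S = univ := eq_univ_of_forall fun x => by
      obtain ⟨y, hy, hxy⟩ := not_bddAbove_iff.1 hbdd x
      exact hS hxy.le hy
    rwa [hSuniv]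
  rcases S.eq_empty_or_nonempty with hempty | hne
  · have ha0 : a ≤ 0 := iInf_measure_Iio_eq_zero μ ▸ le_iInf fun t =>
      (lt_of_not_ge fun ht => hempty.subset ht).le
    exact ha0.trans zero_le
  set b := sSup S
  have hb : IsLUB S b := isLUB_csSup hne hbdd
  have hbS : b ∈ S := by
    show μ (Iio b) ≤ a
    rw [measure_Iio_eq_iSup]
    refine iSup_le fun t => ?_
    obtain ⟨s, hs, hts, -⟩ := hb.exists_between t.2
    exact hS hts.le hs
  calc a ≤ μ (Iic b) := by
        rw [measure_Iic_eq_iInf]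
        exact le_iInf fun t => le_of_lt (lt_of_not_ge fun ht => (hb.1 ht).not_gt t.2)
    _ ≤ μ S := measure_mono fun x hx => hS hx hbS

end LeftDistributionFunction

theorem le_measure_setOf_measure_lt_le {Ω : Type*} [MeasurableSpace Ω] (P : Measure Ω)
    [IsProbabilityMeasure P] {Z Z' : Ω → ℝ} (hZ : IdentDistrib Z Z' P P) {α : ℝ}
    (hα0 : 0 ≤ α) (hα1 : α ≤ 1) :
    ENNReal.ofReal α ≤ P {ω | (P {ω' | Z' ω' < Z ω}).toReal ≤ α} := by
  have : IsProbabilityMeasure (P.map Z) := Measure.isProbabilityMeasure_map hZ.aemeasurable_fst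
  have hlaw : ∀ t, P.map Z (Iio t) = P {ω' | Z' ω' < t} := fun t => by
    rw [hZ.map_eq, Measure.map_apply_of_aemeasurable hZ.aemeasurable_snd measurableSet_Iio]
    rfl
  calc ENNReal.ofReal α ≤ P.map Z {t | P.map Z (Iio t) ≤ ENNReal.ofReal α} :=
        le_measure_setOf_measure_Iio_le _ (by simpa using hα1)
    _ = P (Z ⁻¹' {t | P.map Z (Iio t) ≤ ENNReal.ofReal α}) :=
        Measure.map_apply_of_aemeasurable hZ.aemeasurable_fst
          (isLowerSet_setOf_measure_Iio_le _ _).ordConnected.measurableSet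
    _ ≤ P {ω | (P {ω' | Z' ω' < Z ω}).toReal ≤ α} := measure_mono fun ω hω =>
        ENNReal.toReal_le_of_le_ofReal hα0 (hlaw (Z ω) ▸ hω)

section Measurability

variable {Ω : Type*} [MeasurableSpace Ω] {K : ℕ}

theorem measurable_count {n : ℕ} {u : Fin n → Ω → ℝ} (hu : ∀ j, Measurable (u j)) (p : ℝ) :
    Measurable (count u p) :=
  Finset.measurable_sum _ fun j _ =>
    Measurable.ite (measurableSet_le (hu j) measurable_const) measurable_const measurable_const

theorem measurable_ctrlCounts {n : Fin K → ℕ} {U : (i : Fin K) → Fin (n i) → Ω → ℝ}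
    (hU : ∀ i j, Measurable (U i j)) (θ : ℝ) (η : Fin K → ℝ) :
    Measurable (ctrlCounts n U θ η) :=
  measurable_pi_lambda _ fun i => measurable_count (hU i) _

theorem measurable_trtCounts {m : Fin K → ℕ} {V : (i : Fin K) → Fin (m i) → Ω → ℝ}
    (hV : ∀ i j, Measurable (V i j)) (θ : ℝ) (η : Fin K → ℝ) :
    Measurable (trtCounts m V θ η) :=
  measurable_pi_lambda _ fun i => measurable_count (hV i) _

theorem Measurable.WMH {n m : Fin K → ℕ} {x y : Ω → Fin K → ℝ} (hx : Measurable x)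
    (hy : Measurable y) : Measurable fun ω => WMH n m (x ω) (y ω) := by
  unfold ReproCommonOddsRatio.WMH
  fun_prop

end Measurability

theorem nuclearT_le_gammaFn {Ω : Type*} [MeasurableSpace Ω] (P : Measure Ω) {K : ℕ}
    (n m : Fin K → ℕ) (U' : (i : Fin K) → Fin (n i) → Ω → ℝ)
    (V' : (i : Fin K) → Fin (m i) → Ω → ℝ) (x y : Fin K → ℝ) (θ : ℝ) (ηt : Fin K → ℝ) :
    nuclearT P n m U' V' x y θ ≤ gammaFn P n m U' V' θ ηt |WMH n m x y - θ| :=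
  ciInf_le ⟨0, by rintro _ ⟨_, rfl⟩; exact ENNReal.toReal_nonneg⟩ ηt

theorem repro_coverage_common_odds_ratio_general
    {Ω : Type*} [MeasurableSpace Ω] (P : Measure Ω) [IsProbabilityMeasure P]
    (K : ℕ)
    (n m : Fin K → ℕ)
    (U U' : (i : Fin K) → Fin (n i) → Ω → ℝ)
    (V V' : (i : Fin K) → Fin (m i) → Ω → ℝ)
    (hUmeas : ∀ i j, Measurable (U i j)) (hU'meas : ∀ i j, Measurable (U' i j))
    (hVmeas : ∀ i j, Measurable (V i j)) (hV'meas : ∀ i j, Measurable (V' i j))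
    (hUlaw : ∀ i j, P.map (U i j) = volume.restrict (Set.Icc (0 : ℝ) 1))
    (hU'law : ∀ i j, P.map (U' i j) = volume.restrict (Set.Icc (0 : ℝ) 1))
    (hVlaw : ∀ i j, P.map (V i j) = volume.restrict (Set.Icc (0 : ℝ) 1))
    (hV'law : ∀ i j, P.map (V' i j) = volume.restrict (Set.Icc (0 : ℝ) 1))
    (hindep : iIndepFun (m :=
      fun _ : ((Σ i : Fin K, Fin (n i)) ⊕ (Σ i : Fin K, Fin (m i))) ⊕
               ((Σ i : Fin K, Fin (n i)) ⊕ (Σ i : Fin K, Fin (m i))) =>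
        (inferInstance : MeasurableSpace ℝ))
      (Sum.elim
        (Sum.elim (fun idx : Σ i : Fin K, Fin (n i) => U idx.1 idx.2)
                  (fun idx : Σ i : Fin K, Fin (m i) => V idx.1 idx.2))
        (Sum.elim (fun idx : Σ i : Fin K, Fin (n i) => U' idx.1 idx.2)
                  (fun idx : Σ i : Fin K, Fin (m i) => V' idx.1 idx.2))) P)
    (θo : ℝ) (ηo : Fin K → ℝ) :
    ∀ α ∈ Set.Icc (0 : ℝ) 1,
      ENNReal.ofReal α ≤
        P {ω : Ω |
            nuclearT P n m U' V'
              (ctrlCounts n U θo ηo ω) (trtCounts m V θo ηo ω) θo ≤ α} := by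
  rintro α ⟨hα0, hα1⟩
  -- the statistic `|W_MH - θᵒ|` as a function of the pooled sample `w`
  let Φ : ((Σ i : Fin K, Fin (n i)) ⊕ (Σ i : Fin K, Fin (m i)) → ℝ) → ℝ := fun w =>
    |WMH n m (ctrlCounts n (fun i j w => w (.inl ⟨i, j⟩)) θo ηo w)
      (trtCounts m (fun i j w => w (.inr ⟨i, j⟩)) θo ηo w) - θo|
  have hΦ : Measurable Φ := by
    refine ((Measurable.WMH (measurable_ctrlCounts ?_ θo ηo)
      (measurable_trtCounts ?_ θo ηo)).sub_const _).abs <;> exact fun _ _ => measurable_pi_apply _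
  have hpool := IdentDistrib.pi (μ := P) (ν := P) ?marginals (hindep.precomp Sum.inl_injective)
    (hindep.precomp Sum.inr_injective)
  case marginals =>
    rintro (⟨i, j⟩ | ⟨i, j⟩)
    · exact ⟨(hUmeas i j).aemeasurable, (hU'meas i j).aemeasurable,
        (hUlaw i j).trans (hU'law i j).symm⟩
    · exact ⟨(hVmeas i j).aemeasurable, (hV'meas i j).aemeasurable,
        (hVlaw i j).trans (hV'law i j).symm⟩
  exact (le_measure_setOf_measure_lt_le P (hpool.comp hΦ) hα0 hα1).trans
    (measure_mono fun ω hω => (nuclearT_le_gammaFn P n m U' V' _ _ θo ηo).trans hω)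

/-- Theorem 1 of the paper: with data generated at the true
parameter values `(θᵒ, ηᵒ)` from mutually independent Uniform(0,1) variables
`U_{ij}, V_{ij}` (and an independent copy `U'_{ij}, V'_{ij}` used to define the
nuclear mapping), for every `α ∈ [0,1]` one has `P(T(X,Y;θᵒ) ≤ α) ≥ α`;
i.e. the repro samples confidence set `Γ_α = {θ : T(X,Y;θ) ≤ α}` contains the
true common log odds ratio `θᵒ` with probability at least `α`. -/
theorem repro_coverage_common_odds_ratio
    {Ω : Type*} [MeasurableSpace Ω] (P : Measure Ω) [IsProbabilityMeasure P]
    (K : ℕ) (hK : 1 ≤ K)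
    (n m : Fin K → ℕ) (hn : ∀ i, 1 ≤ n i) (hm : ∀ i, 1 ≤ m i)
    (U U' : (i : Fin K) → Fin (n i) → Ω → ℝ)
    (V V' : (i : Fin K) → Fin (m i) → Ω → ℝ)
    (hUmeas : ∀ i j, Measurable (U i j)) (hU'meas : ∀ i j, Measurable (U' i j))
    (hVmeas : ∀ i j, Measurable (V i j)) (hV'meas : ∀ i j, Measurable (V' i j))
    (hUlaw : ∀ i j, P.map (U i j) = volume.restrict (Set.Icc (0 : ℝ) 1))
    (hU'law : ∀ i j, P.map (U' i j) = volume.restrict (Set.Icc (0 : ℝ) 1))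
    (hVlaw : ∀ i j, P.map (V i j) = volume.restrict (Set.Icc (0 : ℝ) 1))
    (hV'law : ∀ i j, P.map (V' i j) = volume.restrict (Set.Icc (0 : ℝ) 1))
    (hindep : iIndepFun (m :=
      fun _ : ((Σ i : Fin K, Fin (n i)) ⊕ (Σ i : Fin K, Fin (m i))) ⊕
               ((Σ i : Fin K, Fin (n i)) ⊕ (Σ i : Fin K, Fin (m i))) =>
        (inferInstance : MeasurableSpace ℝ))
      (Sum.elim
        (Sum.elim (fun idx : Σ i : Fin K, Fin (n i) => U idx.1 idx.2)
                  (fun idx : Σ i : Fin K, Fin (m i) => V idx.1 idx.2))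
        (Sum.elim (fun idx : Σ i : Fin K, Fin (n i) => U' idx.1 idx.2)
                  (fun idx : Σ i : Fin K, Fin (m i) => V' idx.1 idx.2))) P)
    (θo : ℝ) (ηo : Fin K → ℝ) :
    ∀ α ∈ Set.Icc (0 : ℝ) 1,
      ENNReal.ofReal α ≤
        P {ω : Ω |
            nuclearT P n m U' V'
              (ctrlCounts n U θo ηo ω) (trtCounts m V θo ηo ω) θo ≤ α} :=
  repro_coverage_common_odds_ratio_general P K n m U U' V V' hUmeas hU'meas hVmeas hV'meas hUlaw
    hU'law hVlaw hV'law hindep θo ηo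

end ReproCommonOddsRatio
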